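/- Let G be a non-trivial finite abelian group, let p_1, ..., p_m be the distinct prime factors of exp(G), and write G ≅ G_1 × ... × G_m where each G_i is a non-trivial p_i-group. Then 𝔰(G) ≤ Σ_{i=1}^{m} exp(G_1)⋯exp(G_{i-1})·𝔰(G_i) ≤ exp(G)·(𝔰(G_1)/exp(G_1) + ... + 𝔰(G_m)/exp(G_m)). -/

import Mathlib

/-!
Write `G ≅ A × B` with `A = G_1 × ⋯ × G_{m-1}` and `B = G_m`. A sequence of
`𝔰(A) + exp(A)·𝔰(B)` elements contains `𝔰(B)` disjoint blocks of length `exp(A)` whose sums vanish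
in `A`; among the `B`-components of these block sums, `exp(B)` sum to zero, and the union of the
corresponding blocks is a zero-sum subsequence of length `exp(A)·exp(B)`. The exponents of the
`G_i` are pairwise coprime, so this product is `exp(G)` and induction on `m` gives the first
bound. The second is the termwise estimate `∏_{j<i} exp(G_j) ≤ ∏_{j≠i} exp(G_j) = exp(G)/exp(G_i)`.
-/

/-- A finite set in an abelian group is free of three-term arithmetic progressions:
it contains no three distinct elements x, y, z with x + z = 2y.
(Note that x ≠ z and x + z = y + y automatically force x, y, z to be pairwise distinct.) -/
def APFree {G : Type*} [AddCommGroup G] (A : Finset G) : Prop :=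
  ∀ x ∈ A, ∀ y ∈ A, ∀ z ∈ A, x ≠ z → x + z ≠ y + y

/-- r(G): the largest size of a subset of G without a three-term arithmetic progression. -/
noncomputable def rAP (G : Type*) [AddCommGroup G] : ℕ :=
  sSup {k | ∃ A : Finset G, APFree A ∧ A.card = k}

/-- The Erdős–Ginzburg–Ziv constant 𝔰(G): the smallest positive integer s such that every
sequence (multiset) of s elements of G has a subsequence of length exp(G) summing to zero. -/
noncomputable def EGZ (G : Type*) [AddCommGroup G] : ℕ :=
  sInf {s | 0 < s ∧ ∀ m : Multiset G, Multiset.card m = s →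
    ∃ t ≤ m, Multiset.card t = AddMonoid.exponent G ∧ t.sum = 0}

/-- 𝔤(G): the smallest integer a such that every subset of G of size at least a contains
exp(G) distinct elements summing to zero. -/
noncomputable def gEGZ (G : Type*) [AddCommGroup G] : ℕ :=
  sInf {a | ∀ A : Finset G, a ≤ A.card →
    ∃ B ⊆ A, B.card = AddMonoid.exponent G ∧ ∑ x ∈ B, x = 0}

namespace Multiset

variable {α β : Type*}

theorem exists_le_card_eq {M : Multiset α} {n : ℕ} (h : n ≤ card M) :
    ∃ t ≤ M, card t = n := by
  induction M using Quotient.inductionOn with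
  | h l =>
    refine ⟨(l.take n : List α), (List.take_sublist n l).subperm, ?_⟩
    simpa using h

theorem exists_le_map_eq_of_le_map {f : α → β} {M : Multiset α} {t : Multiset β}
    (h : t ≤ M.map f) : ∃ s ≤ M, s.map f = t := by
  induction M using Quotient.inductionOn with
  | h l =>
    induction t using Quotient.inductionOn with
    | h l₁ =>
      obtain ⟨l₂, hperm, hsub⟩ := coe_le.1 h
      obtain ⟨l', hl', rfl⟩ := List.sublist_map_iff.1 hsub
      exact ⟨l', hl'.subperm, coe_eq_coe.2 hperm⟩

theorem join_mono {S T : Multiset (Multiset α)} (h : S ≤ T) : S.join ≤ T.join := by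
  obtain ⟨U, rfl⟩ := le_iff_exists_add.1 h
  simp

end Multiset

open Finset

def HasZeroSumSubseq (G : Type*) [AddCommGroup G] (n s : ℕ) : Prop :=
  ∀ M : Multiset G, s ≤ Multiset.card M → ∃ t ≤ M, Multiset.card t = n ∧ t.sum = 0

namespace HasZeroSumSubseq

variable {G A B X : Type*} [AddCommGroup G] [AddCommGroup A] [AddCommGroup B] {n s : ℕ}

theorem of_card_eq
    (h : ∀ M : Multiset G, Multiset.card M = s → ∃ t ≤ M, Multiset.card t = n ∧ t.sum = 0) :
    HasZeroSumSubseq G n s := by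
  intro M hM
  obtain ⟨M₀, hM₀, hcard⟩ := Multiset.exists_le_card_eq hM
  obtain ⟨t, ht, htn, hsum⟩ := h M₀ hcard
  exact ⟨t, ht.trans hM₀, htn, hsum⟩

theorem exists_le_map_sum_eq_zero (h : HasZeroSumSubseq A n s) (f : X → A) {M : Multiset X}
    (hM : s ≤ Multiset.card M) :
    ∃ t ≤ M, Multiset.card t = n ∧ (t.map f).sum = 0 := by
  obtain ⟨u, hu, hun, hsum⟩ := h (M.map f) (by rwa [Multiset.card_map])
  obtain ⟨t, ht, rfl⟩ := Multiset.exists_le_map_eq_of_le_map hu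
  exact ⟨t, ht, by rwa [Multiset.card_map] at hun, hsum⟩

theorem of_injective (h : HasZeroSumSubseq A n s) (f : G →+ A) (hf : Function.Injective f) :
    HasZeroSumSubseq G n s := by
  intro M hM
  obtain ⟨t, ht, htn, hsum⟩ := h.exists_le_map_sum_eq_zero f hM
  refine ⟨t, ht, htn, hf ?_⟩
  rw [map_multiset_sum, hsum, map_zero]

theorem exists_disjoint_blocks (h : HasZeroSumSubseq A n s) (φ : G →+ A) (k : ℕ) {M : Multiset G}
    (hM : s + n * k ≤ Multiset.card M) :
    ∃ T : Multiset (Multiset G), Multiset.card T = k ∧ T.join ≤ M ∧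
      ∀ t ∈ T, Multiset.card t = n ∧ φ t.sum = 0 := by
  classical
  induction k generalizing M with
  | zero => exact ⟨0, rfl, Multiset.zero_le M, by simp⟩
  | succ k ih =>
    obtain ⟨t, htM, htn, hsum⟩ := h.exists_le_map_sum_eq_zero φ (le_self_add.trans hM)
    have hrest : s + n * k ≤ Multiset.card (M - t) := by
      rw [Multiset.card_sub htM, htn]
      have := Multiset.card_le_card htM
      rw [mul_add_one] at hM
      omega
    obtain ⟨T, hT, hTM, hblocks⟩ := ih hrest
    refine ⟨t ::ₘ T, by rw [Multiset.card_cons, hT], ?_, ?_⟩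
    · calc (t ::ₘ T).join = t + T.join := Multiset.join_cons t T
        _ ≤ t + (M - t) := add_le_add_right hTM t
        _ = M := add_tsub_cancel_of_le htM
    · rintro u hu
      rcases Multiset.mem_cons.1 hu with rfl | hu
      · exact ⟨htn, by rwa [map_multiset_sum]⟩
      · exact hblocks u hu

theorem of_injective_prod {a b r : ℕ} (hA : HasZeroSumSubseq A a s) (hB : HasZeroSumSubseq B b r)
    (φ : G →+ A) (ψ : G →+ B) (hφψ : Function.Injective (φ.prod ψ)) :
    HasZeroSumSubseq G (a * b) (s + a * r) := by
  intro M hM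
  obtain ⟨T, hT, hTM, hblocks⟩ := hA.exists_disjoint_blocks φ r hM
  obtain ⟨S, hST, hS, hψ⟩ := hB.exists_le_map_sum_eq_zero (fun t => ψ t.sum) hT.ge
  have hSblocks : ∀ t ∈ S, Multiset.card t = a ∧ φ t.sum = 0 :=
    fun t ht => hblocks t (Multiset.mem_of_le hST ht)
  refine ⟨S.join, (Multiset.join_mono hST).trans hTM, ?_, ?_⟩
  · rw [Multiset.card_join, Multiset.map_congr rfl fun t ht => (hSblocks t ht).1,
      Multiset.map_const', Multiset.sum_replicate, hS, smul_eq_mul, mul_comm]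
  · have hjoin : S.join.sum = (S.map Multiset.sum).sum := Multiset.sum_join
    refine (injective_iff_map_eq_zero _).1 hφψ _ (Prod.ext ?_ ?_)
    · change φ S.join.sum = 0
      rw [hjoin, map_multiset_sum, Multiset.map_map]
      refine Multiset.sum_eq_zero fun y hy => ?_
      obtain ⟨t, ht, rfl⟩ := Multiset.mem_map.1 hy
      exact (hSblocks t ht).2
    · change ψ S.join.sum = 0
      rwa [hjoin, map_multiset_sum, Multiset.map_map]

end HasZeroSumSubseq

theorem hasZeroSumSubseq_pi {m : ℕ} {G : Fin (m + 1) → Type*} [∀ i, AddCommGroup (G i)]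
    {n s : Fin (m + 1) → ℕ} (h : ∀ i, HasZeroSumSubseq (G i) (n i) (s i)) :
    HasZeroSumSubseq (∀ i, G i) (∏ i, n i) (∑ i, (∏ j ∈ Iio i, n j) * s i) := by
  induction m with
  | zero =>
    have hinj : Function.Injective (Pi.evalAddMonoidHom G 0) := fun x y hxy =>
      funext fun i => Fin.fin_one_eq_zero i ▸ hxy
    simpa [Iio_eq_empty.2 fun b _ => Fin.zero_le b] using (h 0).of_injective _ hinj
  | succ m ih =>
    let restrict : (∀ i, G i) →+ ∀ i : Fin (m + 1), G i.castSucc :=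
      AddMonoidHom.pi fun i => Pi.evalAddMonoidHom G i.castSucc
    have hinj : Function.Injective (restrict.prod (Pi.evalAddMonoidHom G (Fin.last _))) := by
      intro x y hxy
      simp only [Prod.ext_iff] at hxy
      ext i
      induction i using Fin.lastCases with
      | last => exact hxy.2
      | cast i => exact congrFun hxy.1 i
    have := (ih fun i => h i.castSucc).of_injective_prod (h (Fin.last _)) restrict _ hinj
    simpa [Fin.prod_univ_castSucc, Fin.sum_univ_castSucc, Fin.prod_Iio_castSucc,
      Fin.Iio_last_eq_map] using this

theorem hasZeroSumSubseq_card_mul_exponent (G : Type*) [AddCommGroup G] [Fintype G] :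
    HasZeroSumSubseq G (AddMonoid.exponent G) (Fintype.card G * AddMonoid.exponent G) := by
  classical
  intro M hM
  have hcount : ∑ _a : G, AddMonoid.exponent G ≤ ∑ a : G, M.count a := by
    rwa [Multiset.sum_count_eq_card fun a _ => mem_univ a, sum_const, card_univ, smul_eq_mul]
  obtain ⟨a, -, ha⟩ := exists_le_of_sum_le univ_nonempty hcount
  refine ⟨Multiset.replicate _ a, Multiset.le_count_iff_replicate_le.1 ha,
    Multiset.card_replicate _ _, ?_⟩
  rw [Multiset.sum_replicate, AddMonoid.exponent_nsmul_eq_zero]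

theorem egz_pos_and_hasZeroSumSubseq (G : Type*) [AddCommGroup G] [Finite G] :
    0 < EGZ G ∧ HasZeroSumSubseq G (AddMonoid.exponent G) (EGZ G) := by
  have := Fintype.ofFinite G
  have hmem := Nat.sInf_mem (s := {s | 0 < s ∧ ∀ M : Multiset G, Multiset.card M = s →
      ∃ t ≤ M, Multiset.card t = AddMonoid.exponent G ∧ t.sum = 0})
    ⟨_, Nat.mul_pos Fintype.card_pos (Nat.pos_of_ne_zero AddMonoid.exponent_ne_zero_of_finite),
      fun M hM => hasZeroSumSubseq_card_mul_exponent G M hM.ge⟩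
  exact ⟨hmem.1, HasZeroSumSubseq.of_card_eq hmem.2⟩

theorem egz_le {G : Type*} [AddCommGroup G] {s : ℕ} (hs : 0 < s)
    (h : HasZeroSumSubseq G (AddMonoid.exponent G) s) : EGZ G ≤ s :=
  Nat.sInf_le ⟨hs, fun M hM => h M hM.ge⟩

theorem cast_sum_prod_Iio_mul_le {ι : Type*} [Fintype ι] [Preorder ι] [LocallyFiniteOrderBot ι]
    {e : ι → ℕ} (he : ∀ i, 0 < e i) (s : ι → ℕ) :
    ((∑ i, (∏ j ∈ Iio i, e j) * s i : ℕ) : ℝ) ≤ ((∏ i, e i : ℕ) : ℝ) * ∑ i, (s i : ℝ) / e i := by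
  classical
  rw [mul_sum, Nat.cast_sum]
  refine sum_le_sum fun i _ => ?_
  have hIio : ∏ j ∈ Iio i, e j ≤ ∏ j ∈ univ.erase i, e j :=
    prod_le_prod_of_subset_of_one_le' (fun j hj => mem_erase.2 ⟨(mem_Iio.1 hj).ne, mem_univ j⟩)
      fun j _ _ => he j
  calc (((∏ j ∈ Iio i, e j) * s i : ℕ) : ℝ) ≤ (((∏ j ∈ univ.erase i, e j) * s i : ℕ) : ℝ) := by
        gcongr
    _ = ((∏ i, e i : ℕ) : ℝ) * ((s i : ℝ) / e i) := by
        rw [← mul_prod_erase univ e (mem_univ i)]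
        have : (e i : ℝ) ≠ 0 := by exact_mod_cast (he i).ne'
        push_cast
        field_simp

theorem coprime_exponent_of_card_eq_pow {A B : Type*} [AddCommGroup A] [AddCommGroup B]
    [Fintype A] [Fintype B] {p q a b : ℕ} (hp : p.Prime) (hq : q.Prime) (hpq : p ≠ q)
    (hA : Fintype.card A = p ^ a) (hB : Fintype.card B = q ^ b) :
    (AddMonoid.exponent A).Coprime (AddMonoid.exponent B) :=
  (Nat.coprime_pow_primes a b hp hq hpq).coprime_dvd_left (hA ▸ AddGroup.exponent_dvd_card)
    |>.coprime_dvd_right (hB ▸ AddGroup.exponent_dvd_card)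

theorem stmt11_general (G : Type*) [AddCommGroup G] [Nontrivial G]
    (m : ℕ) (p : Fin m → ℕ) (hp : ∀ i, (p i).Prime) (hinj : Function.Injective p)
    (Gi : Fin m → Type*) [∀ i, AddCommGroup (Gi i)] [∀ i, Fintype (Gi i)]
    (hpgroup : ∀ i, ∃ k : ℕ, Fintype.card (Gi i) = p i ^ k)
    (e : G ≃+ ∀ i, Gi i) :
    EGZ G ≤ ∑ i : Fin m,
        (∏ j ∈ Finset.Iio i, AddMonoid.exponent (Gi j)) * EGZ (Gi i) ∧
    ((∑ i : Fin m,
        (∏ j ∈ Finset.Iio i, AddMonoid.exponent (Gi j)) * EGZ (Gi i) : ℕ) : ℝ) ≤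
      (AddMonoid.exponent G : ℝ) *
        ∑ i : Fin m, (EGZ (Gi i) : ℝ) / (AddMonoid.exponent (Gi i) : ℝ) := by
  have hexp : AddMonoid.exponent G = ∏ i, AddMonoid.exponent (Gi i) := by
    rw [AddMonoid.exponent_eq_of_addEquiv e, AddMonoid.exponent_pi, lcm_eq_prod]
    intro i _ j _ hij
    obtain ⟨a, ha⟩ := hpgroup i
    obtain ⟨b, hb⟩ := hpgroup j
    exact coprime_exponent_of_card_eq_pow (hp i) (hp j) (hinj.ne hij) ha hb
  refine ⟨?_, hexp ▸ cast_sum_prod_Iio_mul_le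
    (fun i => Nat.pos_of_ne_zero AddMonoid.exponent_ne_zero_of_finite) _⟩
  obtain ⟨m, rfl⟩ : ∃ k, m = k + 1 := by
    refine Nat.exists_eq_add_one.2 (Nat.pos_of_ne_zero fun hm => ?_)
    subst hm
    exact not_subsingleton G e.injective.subsingleton
  have hpi := hasZeroSumSubseq_pi fun i => (egz_pos_and_hasZeroSumSubseq (Gi i)).2
  refine egz_le ?_ (hexp ▸ hpi.of_injective e.toAddMonoidHom e.injective)
  refine Nat.lt_of_lt_of_le ?_ (single_le_sum (fun i _ => Nat.zero_le _) (mem_univ 0))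
  simpa [Iio_eq_empty.2 fun b _ => Fin.zero_le b] using (egz_pos_and_hasZeroSumSubseq (Gi 0)).1

/-- **Lemma.** Let G be a non-trivial finite abelian group, let p_1, ..., p_m be the distinct
prime factors of exp(G), and write G ≅ G_1 × ... × G_m where each G_i is a non-trivial
p_i-group. Then
𝔰(G) ≤ ∑_{i=1}^m exp(G_1)⋯exp(G_{i-1})·𝔰(G_i) ≤ exp(G)·∑_{i=1}^m 𝔰(G_i)/exp(G_i). -/
theorem stmt11 (G : Type*) [AddCommGroup G] [Fintype G] [Nontrivial G]
    (m : ℕ) (p : Fin m → ℕ) (hp : ∀ i, (p i).Prime) (hinj : Function.Injective p)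
    (hfac : ∀ q, q ∈ (AddMonoid.exponent G).primeFactors ↔ ∃ i, p i = q)
    (Gi : Fin m → Type*) [∀ i, AddCommGroup (Gi i)] [∀ i, Fintype (Gi i)]
    [∀ i, Nontrivial (Gi i)]
    (hpgroup : ∀ i, ∃ k : ℕ, Fintype.card (Gi i) = p i ^ k)
    (e : G ≃+ ∀ i, Gi i) :
    EGZ G ≤ ∑ i : Fin m,
        (∏ j ∈ Finset.Iio i, AddMonoid.exponent (Gi j)) * EGZ (Gi i) ∧
    ((∑ i : Fin m,
        (∏ j ∈ Finset.Iio i, AddMonoid.exponent (Gi j)) * EGZ (Gi i) : ℕ) : ℝ) ≤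
      (AddMonoid.exponent G : ℝ) *
        ∑ i : Fin m, (EGZ (Gi i) : ℝ) / (AddMonoid.exponent (Gi i) : ℝ) :=
  stmt11_general G m p hp hinj Gi hpgroup e
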